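/- Let β, γ be real numbers with β < 2, γ > β - 1, β ≠ 1 and γ ≠ 1. Define the Kummer confluent hypergeometric function M(a,b,t) = ∑_{k=0}^∞ ((a)_k / (b)_k) · t^k / k!, where (x)_k = x(x+1)⋯(x+k-1) is the Pochhammer symbol. Define b̂₀(t) = (1-β) · M(γ-β+1, 1-β, t) / M(γ-β+1, 2-β, t) and v̂₀(t) = (γ - β + t - b̂₀(t)) · t / (γ - 1). Then for every t > 0 with M(γ-β+1, 2-β, t) ≠ 0, v̂₀ is differentiable at t and satisfies t² v̂₀'(t) = (γ-1) v̂₀(t)² + t (2 - t + β - 2γ) v̂₀(t) + (γ-β) t². -/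

import Mathlib

open Polynomial Filter Topology

lemma poch_succ_left_eval (k : ℕ) (x : ℝ) :
    (ascPochhammer ℝ (k+1)).eval x = x * (ascPochhammer ℝ k).eval (x+1) := by
  rw [ascPochhammer_succ_left]
  simp [Polynomial.eval_comp]

lemma poch_ne_zero_of_pos {x : ℝ} (hx : 0 < x) (k : ℕ) :
    (ascPochhammer ℝ k).eval x ≠ 0 := (ascPochhammer_pos k x hx).ne'

lemma poch_sub_one_ne_zero {b : ℝ} (hb : 0 < b) (hb1 : b ≠ 1) (k : ℕ) :
    (ascPochhammer ℝ k).eval (b - 1) ≠ 0 := by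
  cases k with
  | zero => simp
  | succ m =>
    rw [poch_succ_left_eval, sub_add_cancel]
    exact mul_ne_zero (sub_ne_zero.mpr hb1) (poch_ne_zero_of_pos hb m)

/-- Master summability bound series. -/
lemma kummer_aux_summable (a b R : ℝ) :
    Summable (fun k : ℕ => |(ascPochhammer ℝ k).eval a / (ascPochhammer ℝ k).eval b|
      * ((k : ℝ) + 1) * |R| ^ k / (Nat.factorial k : ℝ)) := by
  set f : ℕ → ℝ := fun k => |(ascPochhammer ℝ k).eval a / (ascPochhammer ℝ k).eval b|
      * ((k : ℝ) + 1) * |R| ^ k / (Nat.factorial k : ℝ) with hf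
  have hnn : ∀ k, 0 ≤ f k := fun k => by
    apply div_nonneg _ (by positivity); positivity
  apply summable_of_ratio_norm_eventually_le (r := 1/2) (by norm_num)
  rw [Filter.eventually_atTop]
  refine ⟨⌈|a| + 2*|b| + 16*|R|⌉₊ + 1, fun k hk => ?_⟩
  have hk1 : (1 : ℝ) ≤ (k : ℝ) := by exact_mod_cast Nat.one_le_iff_ne_zero.mpr (by omega)
  have hceil : |a| + 2*|b| + 16*|R| ≤ (k : ℝ) := by
    calc |a| + 2*|b| + 16*|R| ≤ (⌈|a| + 2*|b| + 16*|R|⌉₊ : ℝ) := Nat.le_ceil _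
    _ ≤ (k : ℝ) := by exact_mod_cast Nat.le_of_succ_le hk
  have hka : |a| ≤ (k : ℝ) := by nlinarith [abs_nonneg b, abs_nonneg R]
  have hkb : 2 * |b| ≤ (k : ℝ) := by nlinarith [abs_nonneg a, abs_nonneg R]
  have hkR : 16 * |R| ≤ (k : ℝ) := by nlinarith [abs_nonneg a, abs_nonneg b]
  rw [Real.norm_eq_abs, Real.norm_eq_abs, abs_of_nonneg (hnn _), abs_of_nonneg (hnn _)]
  by_cases hB : (ascPochhammer ℝ (k+1)).eval b = 0
  · have : f (k+1) = 0 := by simp [hf, hB]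
    rw [this]
    positivity
  · rw [ascPochhammer_succ_eval] at hB
    have hPb : (ascPochhammer ℝ k).eval b ≠ 0 := fun h => hB (by rw [h]; ring)
    have hbk : b + (k : ℝ) ≠ 0 := fun h => hB (by rw [h]; ring)
    have hbk2 : (k : ℝ)/2 ≤ b + (k : ℝ) := by nlinarith [neg_abs_le b]
    have hbkpos : (0:ℝ) < |b + (k:ℝ)| := abs_pos.mpr hbk
    have hfk : (Nat.factorial k : ℝ) ≠ 0 := by positivity
    set A := |(ascPochhammer ℝ k).eval a / (ascPochhammer ℝ k).eval b| with hA
    set Q := |(a + (k:ℝ)) / (b + (k:ℝ))| with hQ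
    have hQ4 : Q ≤ 4 := by
      rw [hQ, abs_div, div_le_iff₀ hbkpos]
      have h1 : |a + (k:ℝ)| ≤ |a| + (k:ℝ) := by
        calc |a + (k:ℝ)| ≤ |a| + |(k:ℝ)| := abs_add_le _ _
        _ = |a| + (k:ℝ) := by rw [Nat.abs_cast]
      have h2 : (k:ℝ)/2 ≤ |b + (k:ℝ)| := le_trans hbk2 (le_abs_self _)
      nlinarith
    have hQ0 : 0 ≤ Q := abs_nonneg _
    have e1 : f (k+1) = (A * |R|^k / (Nat.factorial k : ℝ)) * (Q * (((k:ℝ)+1)+1) * |R| / ((k:ℝ)+1)) := by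
      show |(ascPochhammer ℝ (k+1)).eval a / (ascPochhammer ℝ (k+1)).eval b|
          * (((k+1 : ℕ) : ℝ) + 1) * |R| ^ (k+1) / (Nat.factorial (k+1) : ℝ) = _
      rw [ascPochhammer_succ_eval, ascPochhammer_succ_eval, mul_div_mul_comm, abs_mul,
        Nat.factorial_succ, pow_succ]
      push_cast
      rw [← hA, ← hQ]
      field_simp
    have e2 : (1:ℝ)/2 * f k = (A * |R|^k / (Nat.factorial k : ℝ)) * (((k:ℝ)+1)/2) := by
      show (1:ℝ)/2 * (A * ((k:ℝ)+1) * |R|^k / (Nat.factorial k : ℝ)) = _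
      field_simp
    rw [e1, e2]
    apply mul_le_mul_of_nonneg_left _ (by positivity)
    rw [div_le_div_iff₀ (by positivity) (by norm_num)]
    nlinarith [mul_le_mul_of_nonneg_right hQ4 (show (0:ℝ) ≤ (((k:ℝ)+1)+1)*|R| by positivity),
      mul_le_mul_of_nonneg_left hkR (show (0:ℝ) ≤ ((k:ℝ)+1)+1 by positivity), abs_nonneg R]

lemma kummer_term_summable (a b t : ℝ) :
    Summable (fun k : ℕ => (ascPochhammer ℝ k).eval a / (ascPochhammer ℝ k).eval b
      * t ^ k / (Nat.factorial k : ℝ)) := by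
  apply Summable.of_norm_bounded (kummer_aux_summable a b t)
  intro k
  rw [Real.norm_eq_abs, abs_div, abs_mul, abs_pow, Nat.abs_cast]
  rw [div_le_div_iff_of_pos_right (by positivity)]
  have h0 := abs_nonneg ((ascPochhammer ℝ k).eval a / (ascPochhammer ℝ k).eval b)
  have h1 := pow_nonneg (abs_nonneg t) k
  nlinarith [mul_nonneg (mul_nonneg h0 (Nat.cast_nonneg k : (0:ℝ) ≤ (k:ℝ))) h1]

lemma kummer_deriv_bound (a b : ℝ) {R y : ℝ} (hR1 : 1 ≤ R) (hy : |y| ≤ R) (k : ℕ) :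
    ‖(ascPochhammer ℝ k).eval a / (ascPochhammer ℝ k).eval b * ((k:ℝ) * y ^ (k-1))
        / (Nat.factorial k : ℝ)‖
      ≤ |(ascPochhammer ℝ k).eval a / (ascPochhammer ℝ k).eval b|
        * ((k : ℝ) + 1) * |R| ^ k / (Nat.factorial k : ℝ) := by
  have hR0 : (0:ℝ) ≤ R := le_trans zero_le_one hR1
  rw [Real.norm_eq_abs, abs_div, abs_mul, Nat.abs_cast, abs_of_nonneg hR0]
  have key : |(k:ℝ) * y ^ (k-1)| ≤ ((k:ℝ)+1) * R ^ k := by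
    rw [abs_mul, Nat.abs_cast, abs_pow]
    cases k with
    | zero => simp
    | succ m =>
      have h1 : |y| ^ m ≤ R ^ m := pow_le_pow_left₀ (abs_nonneg y) hy m
      have h2 : R ^ m ≤ R ^ (m+1) := pow_le_pow_right₀ hR1 (Nat.le_succ m)
      have h3 : ((m+1:ℕ):ℝ) ≤ ((m+1:ℕ):ℝ) + 1 := by linarith
      have h4 : (0:ℝ) ≤ ((m+1:ℕ):ℝ) := by positivity
      have h5 : |y| ^ ((m+1) - 1) = |y| ^ m := by norm_num
      rw [h5]
      have : |y| ^ m ≤ R ^ (m+1) := le_trans h1 h2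
      nlinarith [pow_nonneg (abs_nonneg y) m]
  calc |(ascPochhammer ℝ k).eval a / (ascPochhammer ℝ k).eval b| * |(k:ℝ) * y ^ (k-1)|
        / (Nat.factorial k : ℝ)
      ≤ |(ascPochhammer ℝ k).eval a / (ascPochhammer ℝ k).eval b| * (((k:ℝ)+1) * R ^ k)
        / (Nat.factorial k : ℝ) := by
        rw [div_le_div_iff_of_pos_right (by positivity)]
        exact mul_le_mul_of_nonneg_left key (abs_nonneg _)
  _ = _ := by ring
/-- The Kummer confluent hypergeometric function `M(a,b,t) = ∑ (a)_k/(b)_k · t^k/k!`,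
where `(x)_k` is the (ascending) Pochhammer symbol. -/
noncomputable def KummerM (a b t : ℝ) : ℝ :=
  ∑' k : ℕ, ((ascPochhammer ℝ k).eval a / (ascPochhammer ℝ k).eval b)
    * t ^ k / (Nat.factorial k : ℝ)


lemma kummer_deriv_summable (a b t : ℝ) :
    Summable (fun k : ℕ => (ascPochhammer ℝ k).eval a / (ascPochhammer ℝ k).eval b
      * ((k:ℝ) * t ^ (k-1)) / (Nat.factorial k : ℝ)) := by
  apply Summable.of_norm_bounded (kummer_aux_summable a b (|t|+1))
  intro k
  exact kummer_deriv_bound a b (by linarith [abs_nonneg t])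
    (by linarith [abs_nonneg t] : |t| ≤ |t| + 1) k

lemma kummerM_hasDerivAt (a b : ℝ) (hb : 0 < b) (t : ℝ) :
    HasDerivAt (KummerM a b) (a / b * KummerM (a + 1) (b + 1) t) t := by
  have hbne : b ≠ 0 := hb.ne'
  set R : ℝ := |t| + 1 with hR
  have habs : |R| = R := abs_of_nonneg (by positivity)
  have hR1 : (1:ℝ) ≤ R := by rw [hR]; linarith [abs_nonneg t]
  have hR0 : (0:ℝ) < R := by linarith
  have hbound : ∀ (k : ℕ) (y : ℝ), y ∈ Metric.ball (0:ℝ) R →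
      ‖(ascPochhammer ℝ k).eval a / (ascPochhammer ℝ k).eval b
        * ((k:ℝ) * y ^ (k-1)) / (Nat.factorial k : ℝ)‖
      ≤ |(ascPochhammer ℝ k).eval a / (ascPochhammer ℝ k).eval b|
        * ((k : ℝ) + 1) * |R| ^ k / (Nat.factorial k : ℝ) := by
    intro k y hy
    have hyR : |y| ≤ R := by
      have := Metric.mem_ball.mp hy
      rw [Real.dist_eq, sub_zero] at this
      linarith
    exact kummer_deriv_bound a b hR1 hyR k
  have key := hasDerivAt_tsum_of_isPreconnected
    (u := fun k : ℕ => |(ascPochhammer ℝ k).eval a / (ascPochhammer ℝ k).eval b|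
      * ((k : ℝ) + 1) * |R| ^ k / (Nat.factorial k : ℝ))
    (g := fun (k : ℕ) (y : ℝ) => (ascPochhammer ℝ k).eval a / (ascPochhammer ℝ k).eval b
      * y ^ k / (Nat.factorial k : ℝ))
    (g' := fun (k : ℕ) (y : ℝ) => (ascPochhammer ℝ k).eval a / (ascPochhammer ℝ k).eval b
      * ((k:ℝ) * y ^ (k-1)) / (Nat.factorial k : ℝ))
    (kummer_aux_summable a b R) Metric.isOpen_ball (convex_ball (0:ℝ) R).isPreconnected
    (fun k y _ => ((hasDerivAt_pow k y).const_mul _).div_const _)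
    hbound
    (Metric.mem_ball_self hR0) (kummer_term_summable a b 0)
    (show t ∈ Metric.ball (0:ℝ) R by
      rw [Metric.mem_ball, Real.dist_eq, sub_zero, hR]; linarith [le_abs_self t])
  have hsum : (∑' k : ℕ, (ascPochhammer ℝ k).eval a / (ascPochhammer ℝ k).eval b
      * ((k:ℝ) * t ^ (k-1)) / (Nat.factorial k : ℝ)) = a / b * KummerM (a + 1) (b + 1) t := by
    rw [Summable.tsum_eq_zero_add (kummer_deriv_summable a b t)]
    simp only [Nat.cast_zero, zero_mul, mul_zero, zero_div, zero_add]
    have hterm : ∀ k : ℕ, (ascPochhammer ℝ (k+1)).eval a / (ascPochhammer ℝ (k+1)).eval b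
        * (((k+1:ℕ):ℝ) * t ^ ((k+1)-1)) / (Nat.factorial (k+1) : ℝ)
        = a / b * ((ascPochhammer ℝ k).eval (a+1) / (ascPochhammer ℝ k).eval (b+1)
            * t ^ k / (Nat.factorial k : ℝ)) := by
      intro k
      have hB1 : (ascPochhammer ℝ k).eval (b+1) ≠ 0 :=
        poch_ne_zero_of_pos (by linarith) k
      have hkf : (Nat.factorial k : ℝ) ≠ 0 := by positivity
      have hk1 : ((k:ℝ)+1) ≠ 0 := by positivity
      rw [poch_succ_left_eval, poch_succ_left_eval, Nat.factorial_succ,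
        Nat.add_sub_cancel]
      push_cast
      field_simp
    rw [tsum_congr hterm, tsum_mul_left]
    rfl
  rw [← hsum]
  exact key

lemma poch_shift_key (x : ℝ) (k : ℕ) :
    (x + (k:ℝ)) * (ascPochhammer ℝ k).eval x = x * (ascPochhammer ℝ k).eval (x+1) := by
  have h1 := poch_succ_left_eval k x
  have h2 := ascPochhammer_succ_eval k x
  linear_combination h2.symm.trans h1

lemma poch_shift_div {x : ℝ} (hx : x ≠ 0) (k : ℕ) :
    (ascPochhammer ℝ k).eval (x+1) = (x + (k:ℝ)) * (ascPochhammer ℝ k).eval x / x := by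
  rw [eq_div_iff hx]; linear_combination (-1 : ℝ) * poch_shift_key x k

lemma kummer_hasSum (a b t : ℝ) :
    HasSum (fun k : ℕ => (ascPochhammer ℝ k).eval a / (ascPochhammer ℝ k).eval b
      * t ^ k / (Nat.factorial k : ℝ)) (KummerM a b t) :=
  (kummer_term_summable a b t).hasSum

/-- Contiguous relation. -/
lemma kummer_contig (a b : ℝ) (hb : 0 < b) (hb1 : b ≠ 1) (t : ℝ) :
    (b - 1) * KummerM a (b - 1) t
      = (b - 1) * KummerM a b t + t * (a / b * KummerM (a + 1) (b + 1) t) := by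
  have hbne : b ≠ 0 := hb.ne'
  have h1 : HasSum (fun k : ℕ => (b-1) * ((ascPochhammer ℝ k).eval a
      / (ascPochhammer ℝ k).eval b * t ^ k / (Nat.factorial k : ℝ)))
      ((b-1) * KummerM a b t) := (kummer_hasSum a b t).mul_left _
  have h2 : HasSum (fun k : ℕ => t * (a/b * ((ascPochhammer ℝ k).eval (a+1)
      / (ascPochhammer ℝ k).eval (b+1) * t ^ k / (Nat.factorial k : ℝ))))
      (t * (a/b * KummerM (a+1) (b+1) t)) :=
    ((kummer_hasSum (a+1) (b+1) t).mul_left _).mul_left _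
  have hshift : (fun k : ℕ => t * (a/b * ((ascPochhammer ℝ k).eval (a+1)
      / (ascPochhammer ℝ k).eval (b+1) * t ^ k / (Nat.factorial k : ℝ))))
      = (fun k : ℕ => (fun j : ℕ => (j:ℝ) * ((ascPochhammer ℝ j).eval a
        / (ascPochhammer ℝ j).eval b * t ^ j / (Nat.factorial j : ℝ))) (k + 1)) := by
    funext k
    show t * (a/b * ((ascPochhammer ℝ k).eval (a+1)
        / (ascPochhammer ℝ k).eval (b+1) * t ^ k / (Nat.factorial k : ℝ)))
      = ((k+1:ℕ):ℝ) * ((ascPochhammer ℝ (k+1)).eval a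
        / (ascPochhammer ℝ (k+1)).eval b * t ^ (k+1) / (Nat.factorial (k+1) : ℝ))
    have hB1 : (ascPochhammer ℝ k).eval (b+1) ≠ 0 := poch_ne_zero_of_pos (by linarith) k
    have hkf : (Nat.factorial k : ℝ) ≠ 0 := by positivity
    rw [poch_succ_left_eval, poch_succ_left_eval, Nat.factorial_succ, pow_succ]
    push_cast
    field_simp
  rw [hshift] at h2
  have hd : HasSum (fun j : ℕ => (j:ℝ) * ((ascPochhammer ℝ j).eval a
      / (ascPochhammer ℝ j).eval b * t ^ j / (Nat.factorial j : ℝ)))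
      (t * (a/b * KummerM (a+1) (b+1) t)) := by
    have h3 := (hasSum_nat_add_iff (f := fun j : ℕ => (j:ℝ) * ((ascPochhammer ℝ j).eval a
      / (ascPochhammer ℝ j).eval b * t ^ j / (Nat.factorial j : ℝ))) 1).mp h2
    simpa using h3
  have h4 := h1.add hd
  have h5 : (fun k : ℕ => (b-1) * ((ascPochhammer ℝ k).eval a
      / (ascPochhammer ℝ k).eval b * t ^ k / (Nat.factorial k : ℝ))
      + (k:ℝ) * ((ascPochhammer ℝ k).eval a
      / (ascPochhammer ℝ k).eval b * t ^ k / (Nat.factorial k : ℝ)))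
      = (fun k : ℕ => (b-1) * ((ascPochhammer ℝ k).eval a
      / (ascPochhammer ℝ k).eval (b-1) * t ^ k / (Nat.factorial k : ℝ))) := by
    funext k
    have hB : (ascPochhammer ℝ k).eval b ≠ 0 := poch_ne_zero_of_pos hb k
    have hB' : (ascPochhammer ℝ k).eval (b-1) ≠ 0 := poch_sub_one_ne_zero hb hb1 k
    have key : ((b-1) + (k:ℝ)) * (ascPochhammer ℝ k).eval (b-1)
        = (b-1) * (ascPochhammer ℝ k).eval b := by
      have := poch_shift_key (b-1) k
      rw [sub_add_cancel] at this
      linarith [this]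
    have hdiv : (b-1) / (ascPochhammer ℝ k).eval (b-1)
        = ((b-1) + (k:ℝ)) / (ascPochhammer ℝ k).eval b := by
      rw [div_eq_div_iff hB' hB]
      linear_combination (-1 : ℝ) * key
    calc (b-1) * ((ascPochhammer ℝ k).eval a
          / (ascPochhammer ℝ k).eval b * t ^ k / (Nat.factorial k : ℝ))
        + (k:ℝ) * ((ascPochhammer ℝ k).eval a
          / (ascPochhammer ℝ k).eval b * t ^ k / (Nat.factorial k : ℝ))
        = (((b-1) + (k:ℝ)) / (ascPochhammer ℝ k).eval b)
          * ((ascPochhammer ℝ k).eval a * t ^ k / (Nat.factorial k : ℝ)) := by ring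
      _ = ((b-1) / (ascPochhammer ℝ k).eval (b-1))
          * ((ascPochhammer ℝ k).eval a * t ^ k / (Nat.factorial k : ℝ)) := by rw [hdiv]
      _ = (b-1) * ((ascPochhammer ℝ k).eval a
          / (ascPochhammer ℝ k).eval (b-1) * t ^ k / (Nat.factorial k : ℝ)) := by ring
  rw [h5] at h4
  exact ((kummer_hasSum a (b-1) t).mul_left (b-1)).unique h4

/-- Kummer's differential equation at the level of values. -/
lemma kummer_ode (a b : ℝ) (ha : 0 < a) (hb : 0 < b) (t : ℝ) :
    t * (a/b * ((a+1)/(b+1) * KummerM (a+2) (b+2) t))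
      + (b * (a/b * KummerM (a+1) (b+1) t) - t * (a/b * KummerM (a+1) (b+1) t))
      = a * KummerM a b t := by
  have hane : a ≠ 0 := ha.ne'
  have hbne : b ≠ 0 := hb.ne'
  have ha1 : a + 1 ≠ 0 := by linarith
  have hb1 : b + 1 ≠ 0 := by linarith
  -- series with shifted index, as functions of j
  set d2 : ℕ → ℝ := fun j => (j:ℝ) * ((ascPochhammer ℝ j).eval a
      / (ascPochhammer ℝ j).eval b * t ^ j / (Nat.factorial j : ℝ)) with hd2def
  set d3 : ℕ → ℝ := fun j => (j:ℝ) * ((a + (j:ℝ))/(b + (j:ℝ))) * ((ascPochhammer ℝ j).eval a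
      / (ascPochhammer ℝ j).eval b * t ^ j / (Nat.factorial j : ℝ)) with hd3def
  -- the t * M1 series shifts to d2
  have h2 : HasSum (fun k : ℕ => t * (a/b * ((ascPochhammer ℝ k).eval (a+1)
      / (ascPochhammer ℝ k).eval (b+1) * t ^ k / (Nat.factorial k : ℝ))))
      (t * (a/b * KummerM (a+1) (b+1) t)) :=
    ((kummer_hasSum (a+1) (b+1) t).mul_left _).mul_left _
  have hshift2 : (fun k : ℕ => t * (a/b * ((ascPochhammer ℝ k).eval (a+1)
      / (ascPochhammer ℝ k).eval (b+1) * t ^ k / (Nat.factorial k : ℝ))))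
      = fun k : ℕ => d2 (k + 1) := by
    funext k
    show t * (a/b * ((ascPochhammer ℝ k).eval (a+1)
        / (ascPochhammer ℝ k).eval (b+1) * t ^ k / (Nat.factorial k : ℝ)))
      = ((k+1:ℕ):ℝ) * ((ascPochhammer ℝ (k+1)).eval a
        / (ascPochhammer ℝ (k+1)).eval b * t ^ (k+1) / (Nat.factorial (k+1) : ℝ))
    have hB1 : (ascPochhammer ℝ k).eval (b+1) ≠ 0 := poch_ne_zero_of_pos (by linarith) k
    have hkf : (Nat.factorial k : ℝ) ≠ 0 := by positivity
    rw [poch_succ_left_eval, poch_succ_left_eval, Nat.factorial_succ, pow_succ]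
    push_cast
    field_simp
  rw [hshift2] at h2
  have hd2 : HasSum d2 (t * (a/b * KummerM (a+1) (b+1) t)) := by
    have h3 := (hasSum_nat_add_iff (f := d2) 1).mp h2
    simpa [hd2def] using h3
  -- the t * M2 series shifts to d3
  have h3 : HasSum (fun k : ℕ => t * (a/b * ((a+1)/(b+1) * ((ascPochhammer ℝ k).eval (a+2)
      / (ascPochhammer ℝ k).eval (b+2) * t ^ k / (Nat.factorial k : ℝ)))))
      (t * (a/b * ((a+1)/(b+1) * KummerM (a+2) (b+2) t))) :=
    (((kummer_hasSum (a+2) (b+2) t).mul_left _).mul_left _).mul_left _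
  have hshift3 : (fun k : ℕ => t * (a/b * ((a+1)/(b+1) * ((ascPochhammer ℝ k).eval (a+2)
      / (ascPochhammer ℝ k).eval (b+2) * t ^ k / (Nat.factorial k : ℝ)))))
      = fun k : ℕ => d3 (k + 1) := by
    funext k
    show t * (a/b * ((a+1)/(b+1) * ((ascPochhammer ℝ k).eval (a+2)
        / (ascPochhammer ℝ k).eval (b+2) * t ^ k / (Nat.factorial k : ℝ))))
      = ((k+1:ℕ):ℝ) * ((a + ((k+1:ℕ):ℝ))/(b + ((k+1:ℕ):ℝ)))
        * ((ascPochhammer ℝ (k+1)).eval a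
        / (ascPochhammer ℝ (k+1)).eval b * t ^ (k+1) / (Nat.factorial (k+1) : ℝ))
    have hA2 : (ascPochhammer ℝ k).eval (a+2)
        = ((a+1) + (k:ℝ)) * (ascPochhammer ℝ k).eval (a+1) / (a+1) := by
      have := poch_shift_div ha1 k
      rw [show (a+1)+1 = a+2 by ring] at this
      exact this
    have hB2 : (ascPochhammer ℝ k).eval (b+2)
        = ((b+1) + (k:ℝ)) * (ascPochhammer ℝ k).eval (b+1) / (b+1) := by
      have := poch_shift_div hb1 k
      rw [show (b+1)+1 = b+2 by ring] at this
      exact this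
    have hB1 : (ascPochhammer ℝ k).eval (b+1) ≠ 0 := poch_ne_zero_of_pos (by linarith) k
    have hbk1 : b + ((k:ℝ)+1) ≠ 0 := by positivity
    have hkf : (Nat.factorial k : ℝ) ≠ 0 := by positivity
    have hbk1' : (b+1) + (k:ℝ) ≠ 0 := by positivity
    rw [hA2, hB2, poch_succ_left_eval, poch_succ_left_eval, Nat.factorial_succ, pow_succ]
    push_cast
    field_simp
    ring
  rw [hshift3] at h3
  have hd3 : HasSum d3 (t * (a/b * ((a+1)/(b+1) * KummerM (a+2) (b+2) t))) := by
    have h4 := (hasSum_nat_add_iff (f := d3) 1).mp h3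
    simpa [hd3def] using h4
  -- the b * M1 series, unshifted
  have h0 : HasSum (fun k : ℕ => b * (a/b * ((ascPochhammer ℝ k).eval (a+1)
      / (ascPochhammer ℝ k).eval (b+1) * t ^ k / (Nat.factorial k : ℝ))))
      (b * (a/b * KummerM (a+1) (b+1) t)) :=
    ((kummer_hasSum (a+1) (b+1) t).mul_left _).mul_left _
  have hcomb := hd3.add (h0.sub hd2)
  have h5 : (fun k : ℕ => d3 k + (b * (a/b * ((ascPochhammer ℝ k).eval (a+1)
      / (ascPochhammer ℝ k).eval (b+1) * t ^ k / (Nat.factorial k : ℝ))) - d2 k))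
      = fun k : ℕ => a * ((ascPochhammer ℝ k).eval a
      / (ascPochhammer ℝ k).eval b * t ^ k / (Nat.factorial k : ℝ)) := by
    funext k
    have hB : (ascPochhammer ℝ k).eval b ≠ 0 := poch_ne_zero_of_pos hb k
    have hB1 : (ascPochhammer ℝ k).eval (b+1) ≠ 0 := poch_ne_zero_of_pos (by linarith) k
    have hA1 : (ascPochhammer ℝ k).eval (a+1)
        = (a + (k:ℝ)) * (ascPochhammer ℝ k).eval a / a := poch_shift_div hane k
    have hB1' : (ascPochhammer ℝ k).eval (b+1)
        = (b + (k:ℝ)) * (ascPochhammer ℝ k).eval b / b := poch_shift_div hbne k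
    have hbk : b + (k:ℝ) ≠ 0 := by positivity
    have hkf : (Nat.factorial k : ℝ) ≠ 0 := by positivity
    rw [hd3def, hd2def]
    simp only
    rw [hA1, hB1']
    field_simp
    ring
  rw [h5] at hcomb
  exact hcomb.unique ((kummer_hasSum a b t).mul_left a)

theorem initial_condition_shifted_lattice
    (β γ : ℝ) (hβ2 : β < 2) (hγβ : γ > β - 1) (hβ1 : β ≠ 1) (hγ1 : γ ≠ 1)
    (bhat₀ vhat₀ : ℝ → ℝ)
    (hbhat₀ : ∀ t, bhat₀ t =
      (1 - β) * KummerM (γ - β + 1) (1 - β) t / KummerM (γ - β + 1) (2 - β) t)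
    (hvhat₀ : ∀ t, vhat₀ t = (γ - β + t - bhat₀ t) * t / (γ - 1)) :
    ∀ t > (0 : ℝ), KummerM (γ - β + 1) (2 - β) t ≠ 0 →
      DifferentiableAt ℝ vhat₀ t ∧
      t ^ 2 * deriv vhat₀ t =
        (γ - 1) * (vhat₀ t) ^ 2 + t * (2 - t + β - 2 * γ) * vhat₀ t + (γ - β) * t ^ 2 := by
  intro t ht hM
  have hγ1' : γ - 1 ≠ 0 := sub_ne_zero.mpr hγ1
  set a : ℝ := γ - β + 1 with hadef
  set b : ℝ := 2 - β with hbdef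
  have ha : 0 < a := by rw [hadef]; linarith
  have hb : 0 < b := by rw [hbdef]; linarith
  have hbne : b ≠ 0 := hb.ne'
  have hb1ne : b ≠ 1 := by rw [hbdef]; intro h; exact hβ1 (by linarith)
  have h1β : (1 : ℝ) - β = b - 1 := by rw [hbdef]; ring
  have hb1' : b - 1 ≠ 0 := by rw [hbdef]; intro h; exact hβ1 (by linarith)
  have hb1p : (0:ℝ) < b + 1 := by linarith
  have hFd : ∀ s, HasDerivAt (KummerM a b) (a / b * KummerM (a+1) (b+1) s) s :=
    fun s => kummerM_hasDerivAt a b hb s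
  have hF1d : HasDerivAt (KummerM (a+1) (b+1)) ((a+1) / (b+1) * KummerM (a+2) (b+2) t) t := by
    have h := kummerM_hasDerivAt (a+1) (b+1) hb1p t
    rw [show (a+1)+1 = a+2 from by ring, show (b+1)+1 = b+2 from by ring] at h
    exact h
  set m : ℝ := KummerM a b t with hm
  set w : ℝ := KummerM (a+1) (b+1) t with hw
  set K2 : ℝ := KummerM (a+2) (b+2) t with hK2
  set g : ℝ → ℝ := fun s => (γ - β + s
      - ((b - 1) + s * (a / b * KummerM (a+1) (b+1) s) / KummerM a b s)) * s / (γ - 1)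
    with hgdef
  have hne : ∀ᶠ s in 𝓝 t, KummerM a b s ≠ 0 := (hFd t).continuousAt.eventually_ne hM
  have heq : vhat₀ =ᶠ[𝓝 t] g := by
    filter_upwards [hne] with s hs
    rw [hvhat₀ s, hbhat₀ s]
    simp only [hgdef]
    have hcon := kummer_contig a b hb hb1ne s
    have hK : KummerM a (b-1) s
        = ((b-1) * KummerM a b s + s * (a / b * KummerM (a+1) (b+1) s)) / (b-1) := by
      rw [eq_div_iff hb1']
      linear_combination hcon
    rw [h1β, hK]
    field_simp
  have hgd : HasDerivAt g
      (((1 - ((1 * (a/b * w) + t * (a/b * ((a+1)/(b+1) * K2))) * m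
          - t * (a/b * w) * (a/b * w)) / m ^ 2) * t
        + (γ - β + t - ((b - 1) + t * (a/b * w) / m)) * 1) / (γ - 1)) t := by
    exact ((((hasDerivAt_id t).const_add (γ - β)).sub
      ((((hasDerivAt_id t).mul (hF1d.const_mul (a/b))).div (hFd t) hM).const_add
        (b-1))).mul (hasDerivAt_id t)).div_const (γ - 1)
  have hvd := hgd.congr_of_eventuallyEq heq
  refine ⟨hvd.differentiableAt, ?_⟩
  rw [hvd.deriv]
  rw [heq.eq_of_nhds]
  simp only [hgdef]
  rw [← hm, ← hw]
  have hode := kummer_ode a b ha hb t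
  rw [← hm, ← hw, ← hK2] at hode
  have hy : a/b * ((a+1)/(b+1) * K2) = (a*m - (b*(a/b*w) - t*(a/b*w)))/t := by
    rw [eq_div_iff ht.ne']
    linear_combination hode
  rw [hy, hadef, hbdef]
  have h2β : (2:ℝ) - β ≠ 0 := by linarith
  field_simp
  ring
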